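/- arXiv:2209.05120 — 4 statements merged into one kernel-verified Lean document; each statement's English description precedes it below -/
import Mathlib

section
/- The ordered pairing structure P is homogeneous: any isomorphism between finite substructures of P extends to an automorphism of P. -/
/-!
An isomorphism `h` between finite substructures of `P` is order preserving and respects the
sorts, so it restricts to finite order-preserving partial maps `ℚ → ℚ` on the sorts `I` and `J`.
By the back-and-forth argument these extend to order automorphisms `eI`, `eJ` of `ℚ`. Acting by
`eI` on `I`, by `eJ` on `J` and by `eI × eJ` on `Γ` is an automorphism of `P`, and it agrees
with `h` on `Γ ∩ A` because `A` is closed under the projections and `h` commutes with pairing.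
-/

/-- The universe of the ordered pairing structure `P`. -/
abbrev PP : Type := ℚ ⊕ (ℚ ⊕ ℚ × ℚ)

/-- The order of `P`: `I ≪ J ≪ Γ`, each copy of `ℚ` usual, `Γ` lexicographic. -/
def Ple : PP → PP → Prop
  | .inl a, .inl b => a ≤ b
  | .inl _, .inr _ => True
  | .inr _, .inl _ => False
  | .inr (.inl a), .inr (.inl b) => a ≤ b
  | .inr (.inl _), .inr (.inr _) => True
  | .inr (.inr _), .inr (.inl _) => False
  | .inr (.inr p), .inr (.inr q) => p.1 < q.1 ∨ (p.1 = q.1 ∧ p.2 ≤ q.2)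

/-- Automorphisms of `P`. -/
def IsPAut (e : PP ≃ PP) : Prop :=
  (∀ x y, Ple (e x) (e y) ↔ Ple x y) ∧
  (∀ a : ℚ, ∃ b : ℚ, e (.inl a) = .inl b) ∧
  (∀ a : ℚ, ∃ b : ℚ, e (.inr (.inl a)) = .inr (.inl b)) ∧
  (∀ p : ℚ × ℚ, ∃ q : ℚ × ℚ, e (.inr (.inr p)) = .inr (.inr q)) ∧
  (∀ i j i' j' : ℚ, e (.inl i) = .inl i' → e (.inr (.inl j)) = .inr (.inl j') →
    e (.inr (.inr (i, j))) = .inr (.inr (i', j')))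

/-- A subset of `P` is (substructure-)closed if it is closed under the projections `π₁, π₂`
and under the pairing `ρ` when both arguments are present. -/
def PClosed (A : Set PP) : Prop :=
  (∀ p : ℚ × ℚ, (.inr (.inr p) : PP) ∈ A → (.inl p.1 : PP) ∈ A ∧ (.inr (.inl p.2) : PP) ∈ A) ∧
  (∀ i j : ℚ, (.inl i : PP) ∈ A → (.inr (.inl j) : PP) ∈ A → (.inr (.inr (i, j)) : PP) ∈ A)

namespace Order.PartialIso

variable {α β : Type*} [LinearOrder α] [LinearOrder β]
  [Countable α] [DenselyOrdered α] [NoMinOrder α] [NoMaxOrder α] [Nonempty α]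
  [Countable β] [DenselyOrdered β] [NoMinOrder β] [NoMaxOrder β] [Nonempty β]

theorem exists_orderIso_extending (f : PartialIso α β) :
    ∃ e : α ≃o β, ∀ p ∈ f.val, e p.1 = p.2 := by
  cases nonempty_encodable α
  cases nonempty_encodable β
  let toCofinal : α ⊕ β → Cofinal (PartialIso α β) := fun p ↦
    Sum.recOn p (definedAtLeft β) (definedAtRight α)
  let I : Ideal (PartialIso α β) := idealOfCofinals f toCofinal
  let F a := funOfIdeal a I (cofinal_meets_idealOfCofinals _ toCofinal (Sum.inl a))
  let G b := invOfIdeal b I (cofinal_meets_idealOfCofinals _ toCofinal (Sum.inr b))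
  refine ⟨OrderIso.ofCmpEqCmp (fun a ↦ (F a).val) (fun b ↦ (G b).val) fun a b ↦ ?_, ?_⟩
  · obtain ⟨f₁, hf₁, ha⟩ := (F a).prop
    obtain ⟨g₁, hg₁, hb⟩ := (G b).prop
    obtain ⟨m, -, f₁m, g₁m⟩ := I.directed _ hf₁ _ hg₁
    exact m.prop (a, _) (f₁m ha) (_, b) (g₁m hb)
  · rintro ⟨a, b⟩ hab
    obtain ⟨f₁, hf₁, ha⟩ := (F a).prop
    obtain ⟨m, -, f₁m, fm⟩ := I.directed _ hf₁ _ (mem_idealOfCofinals f toCofinal)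
    have hm := m.prop (a, (F a).val) (f₁m ha) (a, b) (fm hab)
    rw [cmp_self_eq_eq] at hm
    exact (cmp_eq_eq_iff _ _).mp hm.symm

end Order.PartialIso

theorem StrictMonoOn.exists_orderIso_eqOn {α β : Type*} [LinearOrder α] [LinearOrder β]
    [Countable α] [DenselyOrdered α] [NoMinOrder α] [NoMaxOrder α] [Nonempty α]
    [Countable β] [DenselyOrdered β] [NoMinOrder β] [NoMaxOrder β] [Nonempty β]
    {s : Set α} (hs : s.Finite) {f : α → β} (hf : StrictMonoOn f s) :
    ∃ e : α ≃o β, Set.EqOn e f s := by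
  let graph : Order.PartialIso α β := ⟨hs.toFinset.image fun a ↦ (a, f a), by
    simp only [Finset.mem_image, Set.Finite.mem_toFinset]
    rintro _ ⟨a, ha, rfl⟩ _ ⟨b, hb, rfl⟩
    exact (hf.cmp_map_eq ha hb).symm⟩
  obtain ⟨e, he⟩ := graph.exists_orderIso_extending
  exact ⟨e, fun a ha ↦ he (a, f a) (Finset.mem_image_of_mem _ (hs.mem_toFinset.2 ha))⟩

theorem strictMonoOn_sortTrace {A : Set PP} {h : PP → PP}
    (hord : ∀ x ∈ A, ∀ y ∈ A, (Ple (h x) (h y) ↔ Ple x y))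
    {ι : ℚ → PP} (hι : ∀ a b, Ple (ι a) (ι b) ↔ a ≤ b)
    {f : ℚ → ℚ} (hf : ∀ a, ι a ∈ A → h (ι a) = ι (f a)) :
    StrictMonoOn f (ι ⁻¹' A) := by
  have hle : ∀ a ∈ ι ⁻¹' A, ∀ b ∈ ι ⁻¹' A, f a ≤ f b ↔ a ≤ b := fun a ha b hb ↦ by
    rw [← hι, ← hι, ← hf a ha, ← hf b hb]
    exact hord _ ha _ hb
  exact fun a ha b hb hab ↦ lt_of_not_ge fun hba ↦ hab.not_ge ((hle b hb a ha).1 hba)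

def pAutOfOrderIsos (eI eJ : ℚ ≃o ℚ) : PP ≃ PP :=
  Equiv.sumCongr eI.toEquiv (Equiv.sumCongr eJ.toEquiv (eI.toEquiv.prodCongr eJ.toEquiv))

theorem isPAut_pAutOfOrderIsos (eI eJ : ℚ ≃o ℚ) : IsPAut (pAutOfOrderIsos eI eJ) := by
  refine ⟨?_, fun a ↦ ⟨eI a, rfl⟩, fun a ↦ ⟨eJ a, rfl⟩, fun p ↦ ⟨(eI p.1, eJ p.2), rfl⟩, ?_⟩
  · rintro (a | a | ⟨a₁, a₂⟩) (b | b | ⟨b₁, b₂⟩) <;>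
      simp [pAutOfOrderIsos, Ple, eI.lt_iff_lt, eI.injective.eq_iff]
  · intro i j i' j' hi hj
    simp_all [pAutOfOrderIsos]

theorem P_homogeneous_general (A : Set PP) (hA : A.Finite) (hAcl : PClosed A)
    (h : PP → PP)
    -- `h` preserves the order:
    (hord : ∀ x ∈ A, ∀ y ∈ A, (Ple (h x) (h y) ↔ Ple x y))
    -- `h` preserves the sorts:
    (hI : ∀ i : ℚ, (.inl i : PP) ∈ A → ∃ i' : ℚ, h (.inl i) = .inl i')
    (hJ : ∀ j : ℚ, (.inr (.inl j) : PP) ∈ A → ∃ j' : ℚ, h (.inr (.inl j)) = .inr (.inl j'))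
    -- `h` preserves the pairing function:
    (hρ : ∀ i j i' j' : ℚ, (.inr (.inr (i, j)) : PP) ∈ A →
      h (.inl i) = .inl i' → h (.inr (.inl j)) = .inr (.inl j') →
      h (.inr (.inr (i, j))) = .inr (.inr (i', j'))) :
    ∃ e : PP ≃ PP, IsPAut e ∧ ∀ x ∈ A, e x = h x := by
  choose! fI hfI using hI
  choose! fJ hfJ using hJ
  obtain ⟨eI, heI⟩ := (strictMonoOn_sortTrace hord (fun _ _ ↦ Iff.rfl) hfI).exists_orderIso_eqOn
    (hA.preimage Sum.inl_injective.injOn)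
  obtain ⟨eJ, heJ⟩ := (strictMonoOn_sortTrace hord (fun _ _ ↦ Iff.rfl) hfJ).exists_orderIso_eqOn
    (hA.preimage (Sum.inr_injective.comp Sum.inl_injective).injOn)
  refine ⟨pAutOfOrderIsos eI eJ, isPAut_pAutOfOrderIsos eI eJ, ?_⟩
  rintro (i | j | ⟨i, j⟩) hx
  · simp [pAutOfOrderIsos, heI hx, hfI i hx]
  · simp [pAutOfOrderIsos, heJ hx, hfJ j hx]
  · obtain ⟨hi, hj⟩ := hAcl.1 (i, j) hx
    simp [pAutOfOrderIsos, heI hi, heJ hj, hρ i j _ _ hx (hfI i hi) (hfJ j hj)]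

/-- `P` is homogeneous: any isomorphism between finite substructures of `P`
extends to an automorphism of `P`. -/
theorem P_homogeneous (A : Set PP) (hA : A.Finite) (hAcl : PClosed A)
    (h : PP → PP) (hinj : Set.InjOn h A) (hBcl : PClosed (h '' A))
    -- `h` preserves the order:
    (hord : ∀ x ∈ A, ∀ y ∈ A, (Ple (h x) (h y) ↔ Ple x y))
    -- `h` preserves the sorts:
    (hI : ∀ i : ℚ, (.inl i : PP) ∈ A → ∃ i' : ℚ, h (.inl i) = .inl i')
    (hJ : ∀ j : ℚ, (.inr (.inl j) : PP) ∈ A → ∃ j' : ℚ, h (.inr (.inl j)) = .inr (.inl j'))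
    (hG : ∀ p : ℚ × ℚ, (.inr (.inr p) : PP) ∈ A →
      ∃ q : ℚ × ℚ, h (.inr (.inr p)) = .inr (.inr q))
    -- `h` preserves the pairing function:
    (hρ : ∀ i j i' j' : ℚ, (.inr (.inr (i, j)) : PP) ∈ A →
      h (.inl i) = .inl i' → h (.inr (.inl j)) = .inr (.inl j') →
      h (.inr (.inr (i, j))) = .inr (.inr (i', j'))) :
    ∃ e : PP ≃ PP, IsPAut e ∧ ∀ x ∈ A, e x = h x :=
  P_homogeneous_general A hA hAcl h hord hI hJ hρ
end

section
/- Two-dimensional product Ramsey theorem: for all positive integers m and colors r, there exists N such that for every r-coloring c of pairs ((i,i'),(j,j')) with i < i' ≤ N and j < j' ≤ N, there exist subsets A, B ⊆ {1,…,N} each of size m such that c is constant on all such pairs drawn from A and B. -/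
/-- Size needed to extract a pre-homogeneous sequence of length `L` with `k` colors. -/
def ramseyIter (k : ℕ) : ℕ → ℕ
  | 0 => 0
  | L + 1 => k * ramseyIter k L + 1

/-- Pre-homogeneous sequence extraction. -/
lemma preHom (κ : Type) [Fintype κ] [Nonempty κ] (L : ℕ) :
    ∀ (S : Finset ℕ) (c : ℕ → ℕ → κ), ramseyIter (Fintype.card κ) L ≤ S.card →
      ∃ f : Fin L → ℕ, StrictMono f ∧ (∀ a, f a ∈ S) ∧
        ∃ g : Fin L → κ, ∀ a b : Fin L, a < b → c (f a) (f b) = g a := by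
  classical
  induction L with
  | zero =>
    intro S c _
    exact ⟨Fin.elim0, fun a => a.elim0, fun a => a.elim0, Fin.elim0, fun a => a.elim0⟩
  | succ L ih =>
    intro S c hS
    have hSne : S.Nonempty := by
      rw [← Finset.card_pos]
      have : 1 ≤ ramseyIter (Fintype.card κ) (L + 1) := Nat.le_add_left 1 _
      omega
    set x := S.min' hSne with hx
    have hxS : x ∈ S := S.min'_mem hSne
    have hcard : Fintype.card κ * ramseyIter (Fintype.card κ) L ≤ (S.erase x).card := by
      rw [Finset.card_erase_of_mem hxS]
      have := hS
      simp only [ramseyIter] at this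
      omega
    obtain ⟨k, -, hk⟩ := Finset.exists_le_card_fiber_of_mul_le_card_of_maps_to
      (f := fun y => c x y) (s := S.erase x) (t := Finset.univ)
      (n := ramseyIter (Fintype.card κ) L)
      (fun a _ => Finset.mem_univ _) Finset.univ_nonempty
      (by simpa using hcard)
    set T := (S.erase x).filter (fun y => c x y = k) with hT
    obtain ⟨f', hf'mono, hf'mem, g', hg'⟩ := ih T c hk
    have hTsub : ∀ y ∈ T, y ∈ S.erase x ∧ c x y = k := by
      intro y hy
      rw [hT, Finset.mem_filter] at hy
      exact hy
    have hxlt : ∀ a, x < f' a := by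
      intro a
      obtain ⟨hy, -⟩ := hTsub _ (hf'mem a)
      rw [Finset.mem_erase] at hy
      exact lt_of_le_of_ne (S.min'_le _ hy.2) (Ne.symm hy.1)
    refine ⟨Fin.cons x f', ?_, ?_, Fin.cons k g', ?_⟩
    · intro a b hab
      induction b using Fin.cases with
      | zero => exact absurd hab (Fin.not_lt_zero a)
      | succ j =>
        induction a using Fin.cases with
        | zero => simpa using hxlt j
        | succ i =>
          simp only [Fin.cons_succ]
          exact hf'mono (by exact_mod_cast Fin.succ_lt_succ_iff.mp hab)
    · intro a
      induction a using Fin.cases with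
      | zero => simpa using hxS
      | succ i =>
        simp only [Fin.cons_succ]
        obtain ⟨hy, -⟩ := hTsub _ (hf'mem i)
        exact (Finset.mem_erase.mp hy).2
    · intro a b hab
      induction b using Fin.cases with
      | zero => exact absurd hab (Fin.not_lt_zero a)
      | succ j =>
        induction a using Fin.cases with
        | zero =>
          simp only [Fin.cons_zero, Fin.cons_succ]
          exact (hTsub _ (hf'mem j)).2
        | succ i =>
          simp only [Fin.cons_succ]
          exact hg' i j (by exact_mod_cast Fin.succ_lt_succ_iff.mp hab)

/-- Finite multicolor Ramsey theorem for pairs, over `ℕ`. -/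
lemma pairRamsey (κ : Type) [Fintype κ] [Nonempty κ] (m : ℕ) :
    ∃ N : ℕ, ∀ c : ℕ → ℕ → κ, ∃ A : Finset ℕ, A ⊆ Finset.range N ∧ A.card = m ∧
      ∃ k : κ, ∀ i ∈ A, ∀ j ∈ A, i < j → c i j = k := by
  classical
  set L := Fintype.card κ * m with hL
  refine ⟨ramseyIter (Fintype.card κ) L, fun c => ?_⟩
  obtain ⟨f, hfmono, hfmem, g, hg⟩ := preHom κ L (Finset.range (ramseyIter (Fintype.card κ) L)) c
    (by simp)
  obtain ⟨k, -, hk⟩ := Finset.exists_le_card_fiber_of_mul_le_card_of_maps_to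
    (f := g) (s := Finset.univ) (t := Finset.univ) (n := m)
    (fun a _ => Finset.mem_univ _) Finset.univ_nonempty
    (by simp [hL])
  obtain ⟨T, hTsub, hTcard⟩ := Finset.exists_subset_card_eq hk
  refine ⟨T.image f, ?_, ?_, k, ?_⟩
  · intro y hy
    obtain ⟨a, -, rfl⟩ := Finset.mem_image.mp hy
    exact hfmem a
  · rw [Finset.card_image_of_injective _ hfmono.injective, hTcard]
  · intro i hi j hj hij
    obtain ⟨a, ha, rfl⟩ := Finset.mem_image.mp hi
    obtain ⟨b, hb, rfl⟩ := Finset.mem_image.mp hj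
    have hab : a < b := by
      by_contra h
      exact absurd (hfmono.le_iff_le.mpr (not_lt.mp h)) (not_le.mpr hij)
    rw [hg a b hab]
    have := hTsub ha
    simp only [Finset.mem_filter] at this
    exact this.2

/-- two-dimensional product Ramsey theorem for pairs: for all `m, r > 0` there is
`N` such that every `r`-coloring of pairs `((i,i'),(j,j'))` with `i < i'` and `j < j'` from
`[N]` admits sets `A, B ⊆ [N]` of size `m` on which the coloring is constant. -/
theorem product_ramsey_pairs (m r : ℕ) (hm : 0 < m) (hr : 0 < r) :
    ∃ N : ℕ, ∀ c : (Fin N × Fin N) × (Fin N × Fin N) → Fin r,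
      ∃ A B : Finset (Fin N), A.card = m ∧ B.card = m ∧
        ∃ color : Fin r, ∀ i i' j j' : Fin N,
          i ∈ A → i' ∈ A → j ∈ B → j' ∈ B → i < i' → j < j' →
            c ((i, i'), (j, j')) = color := by
  have : Nonempty (Fin r) := ⟨⟨0, hr⟩⟩
  -- inner Ramsey number
  obtain ⟨M, hM⟩ := pairRamsey (Fin r) m
  -- outer Ramsey number, coloring by functions Fin M → Fin M → Fin r
  obtain ⟨N0, hN0⟩ := pairRamsey (Fin M → Fin M → Fin r) m
  set N := N0 + M + 1 with hN
  refine ⟨N, fun c => ?_⟩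
  have hNpos : 0 < N := by omega
  set t : ℕ → Fin N := fun x => ⟨x % N, Nat.mod_lt _ hNpos⟩ with ht
  have htval : ∀ x, x < N → (t x : ℕ) = x := fun x hx => Nat.mod_eq_of_lt hx
  -- outer coloring
  set d : ℕ → ℕ → (Fin M → Fin M → Fin r) :=
    fun i i' => fun j j' => c ((t i, t i'), (t (j : ℕ), t (j' : ℕ))) with hd
  obtain ⟨A0, hA0sub, hA0card, k2, hk2⟩ := hN0 d
  -- inner coloring
  set e : ℕ → ℕ → Fin r := fun j j' =>
    if h : j < M ∧ j' < M then k2 ⟨j, h.1⟩ ⟨j', h.2⟩ else Classical.arbitrary _ with he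
  obtain ⟨B0, hB0sub, hB0card, k, hk⟩ := hM e
  have hA0lt : ∀ a ∈ A0, a < N := by
    intro a ha
    have := Finset.mem_range.mp (hA0sub ha); omega
  have hB0lt : ∀ b ∈ B0, b < M := fun b hb => Finset.mem_range.mp (hB0sub hb)
  have hB0ltN : ∀ b ∈ B0, b < N := by intro b hb; have := hB0lt b hb; omega
  refine ⟨A0.image t, B0.image t, ?_, ?_, k, ?_⟩
  · rw [Finset.card_image_of_injOn, hA0card]
    intro a ha b hb hab
    have := htval a (hA0lt a ha)
    have := htval b (hA0lt b hb)
    have : (t a : ℕ) = (t b : ℕ) := by rw [hab]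
    omega
  · rw [Finset.card_image_of_injOn, hB0card]
    intro a ha b hb hab
    have := htval a (hB0ltN a ha)
    have := htval b (hB0ltN b hb)
    have : (t a : ℕ) = (t b : ℕ) := by rw [hab]
    omega
  · intro i i' j j' hi hi' hj hj' hii hjj
    obtain ⟨a, ha, rfl⟩ := Finset.mem_image.mp hi
    obtain ⟨a', ha', rfl⟩ := Finset.mem_image.mp hi'
    obtain ⟨b, hb, rfl⟩ := Finset.mem_image.mp hj
    obtain ⟨b', hb', rfl⟩ := Finset.mem_image.mp hj'
    have haa : a < a' := by
      have h1 := htval a (hA0lt a ha)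
      have h2 := htval a' (hA0lt a' ha')
      have : (t a : ℕ) < (t a' : ℕ) := hii
      omega
    have hbb : b < b' := by
      have h1 := htval b (hB0ltN b hb)
      have h2 := htval b' (hB0ltN b' hb')
      have : (t b : ℕ) < (t b' : ℕ) := hjj
      omega
    have hbM := hB0lt b hb
    have hbM' := hB0lt b' hb'
    have hd1 : d a a' ⟨b, hbM⟩ ⟨b', hbM'⟩ = c ((t a, t a'), (t b, t b')) := rfl
    have hd2 : d a a' = k2 := hk2 a ha a' ha' haa
    have he1 : e b b' = k := hk b hb b' hb' hbb
    have he2 : e b b' = k2 ⟨b, hbM⟩ ⟨b', hbM'⟩ := by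
      rw [he]; simp only []
      rw [dif_pos ⟨hbM, hbM'⟩]
    rw [← hd1, hd2, ← he2, he1]
end

section
/- If a sequence (ā_i b̄_i : i ∈ ℤ) in a sufficiently saturated structure C is order-indiscernible and witnesses the order property for ψ(x̄; ȳ) := ∃z φ(x̄; ȳ; z) (i.e., C ⊨ ψ(ā_i, b̄_j) ⟺ i < j), and if for every n ≥ 1, C ⊨ ∃z ⋀_{j=1}^n φ(ā_0, b̄_j, z), then the formula φ(x̄z; ȳ) (with z moved to the left variables) has the order property in Th(C). -/
/-!
Translating all indices by `i` preserves the type of an order-indiscernible sequence, so the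
hypothesis at `ā₀` shows that for every `i` and `N` the formulas `φ(ā_i, b̄_j, z)`,
`i < j ≤ i + N`, are simultaneously satisfiable. Saturation then yields one `c_i` with
`φ(ā_i, b̄_j, c_i)` for every `j > i`; conversely `φ(ā_i, b̄_j, c_i)` gives `∃z φ(ā_i, b̄_j, z)`,
hence `i < j`.
-/

open FirstOrder Language

namespace FirstOrder.Language

variable {L : Language.{u, v}} {C : Type w} [L.Structure C] {α β γ : Type*}

variable (L C) in
def RealizesCountableTypes : Prop :=
  ∀ (v : ℕ → C) (Φ : ℕ → L.Formula (ℕ ⊕ Unit)),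
    (∀ s : Finset ℕ, ∃ z : C, ∀ i ∈ s, (Φ i).Realize (Sum.elim v fun _ => z)) →
      ∃ z : C, ∀ i, (Φ i).Realize (Sum.elim v fun _ => z)

variable (L) in
def OrderIndiscernible (d : ℤ → γ → C) : Prop :=
  ∀ (n : ℕ) (g h : Fin n → ℤ), StrictMono g → StrictMono h →
    ∀ ψ : L.Formula (Fin n × γ),
      (ψ.Realize fun q => d (g q.1) q.2) ↔ ψ.Realize fun q => d (h q.1) q.2

theorem OrderIndiscernible.realize_add_iff {d : ℤ → γ → C} (hd : L.OrderIndiscernible d)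
    {n : ℕ} (ψ : L.Formula (Fin n × γ)) (i : ℤ) :
    (ψ.Realize fun q => d (i + q.1) q.2) ↔ ψ.Realize fun q => d q.1 q.2 :=
  hd n (fun m => i + m) (fun m => m) (fun _ _ h => by simpa using h)
    (fun _ _ h => by simpa using h) ψ

theorem RealizesCountableTypes.exists_forall_realize [Countable α] [Nonempty C]
    (hsat : L.RealizesCountableTypes C) (v : α → C) (Φ : ℕ → L.Formula (α ⊕ Unit))
    (hfin : ∀ s : Finset ℕ, ∃ z : C, ∀ i ∈ s, (Φ i).Realize (Sum.elim v fun _ => z)) :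
    ∃ z : C, ∀ i, (Φ i).Realize (Sum.elim v fun _ => z) := by
  obtain ⟨e, he⟩ := Countable.exists_injective_nat α
  let w : ℕ → C := Function.extend e v fun _ => Classical.arbitrary C
  have hw (z : C) : Sum.elim w (fun _ : Unit => z) ∘ Sum.map e id = Sum.elim v fun _ => z := by
    ext (x | _) <;> simp [w, he.extend_apply]
  simpa only [Formula.realize_relabel, hw] using
    hsat w (fun i => (Φ i).relabel (Sum.map e id))
      (by simpa only [Formula.realize_relabel, hw] using hfin)

noncomputable def exInfAhead (φ : L.Formula (α ⊕ (β ⊕ Unit))) (N : ℕ) :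
    L.Formula (Fin (N + 1) × (α ⊕ β)) :=
  Formula.iExs Unit <| Formula.iInf fun k : Fin N => φ.relabel <|
    Sum.elim (fun x => Sum.inl (0, Sum.inl x))
      (Sum.elim (fun y => Sum.inl (k.succ, Sum.inr y)) Sum.inr)

theorem realize_exInfAhead (φ : L.Formula (α ⊕ (β ⊕ Unit))) {N : ℕ}
    (x : Fin (N + 1) → α → C) (y : Fin (N + 1) → β → C) :
    ((exInfAhead φ N).Realize fun q => Sum.elim (x q.1) (y q.1) q.2) ↔
      ∃ z : C, ∀ k : Fin N, φ.Realize (Sum.elim (x 0) (Sum.elim (y k.succ) fun _ => z)) := by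
  have hv (k : Fin N) (z : Unit → C) :
      Sum.elim (fun q : Fin (N + 1) × (α ⊕ β) => Sum.elim (x q.1) (y q.1) q.2) z ∘
        Sum.elim (fun a => Sum.inl (0, Sum.inl a))
          (Sum.elim (fun b => Sum.inl (k.succ, Sum.inr b)) Sum.inr) =
      Sum.elim (x 0) (Sum.elim (y k.succ) fun _ => z ()) := by
    ext (a | b | _) <;> rfl
  simp only [exInfAhead, Formula.realize_iExs, Formula.realize_iInf, Formula.realize_relabel, hv]
  exact ⟨fun ⟨z, hz⟩ => ⟨z (), hz⟩, fun ⟨z, hz⟩ => ⟨fun _ => z, hz⟩⟩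

theorem OrderIndiscernible.exists_forall_realize_add {φ : L.Formula (α ⊕ (β ⊕ Unit))}
    {a : ℤ → α → C} {b : ℤ → β → C} (hind : L.OrderIndiscernible fun i => Sum.elim (a i) (b i))
    {N : ℕ} (h : ∃ z : C, ∀ k : Fin N,
      φ.Realize (Sum.elim (a 0) (Sum.elim (b (k + 1)) fun _ => z))) (i : ℤ) :
    ∃ z : C, ∀ k : Fin N,
      φ.Realize (Sum.elim (a i) (Sum.elim (b (i + (k + 1))) fun _ => z)) := by
  have := (hind.realize_add_iff (exInfAhead φ N) i).2
  rw [realize_exInfAhead φ (fun m => a (i + m)) (fun m => b (i + m)),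
    realize_exInfAhead φ (fun m => a m) (fun m => b m)] at this
  simpa using this (by simpa using h)

theorem RealizesCountableTypes.exists_forall_realize_seq [Countable α] [Countable β]
    [Nonempty C] (hsat : L.RealizesCountableTypes C) (φ : L.Formula (α ⊕ (β ⊕ Unit)))
    (a : α → C) (b : ℕ → β → C)
    (hfin : ∀ N : ℕ, ∃ z : C, ∀ n : Fin N, φ.Realize (Sum.elim a (Sum.elim (b n) fun _ => z))) :
    ∃ z : C, ∀ n : ℕ, φ.Realize (Sum.elim a (Sum.elim (b n) fun _ => z)) := by
  let v : α ⊕ ℕ × β → C := Sum.elim a fun p => b p.1 p.2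
  let e (n : ℕ) : α ⊕ (β ⊕ Unit) → (α ⊕ ℕ × β) ⊕ Unit :=
    Sum.elim (Sum.inl ∘ Sum.inl) (Sum.elim (fun y => Sum.inl (Sum.inr (n, y))) Sum.inr)
  have hv (n : ℕ) (z : C) : Sum.elim v (fun _ : Unit => z) ∘ e n =
      Sum.elim a (Sum.elim (b n) fun _ => z) := by
    ext (x | y | _) <;> rfl
  simp only [← hv, ← Formula.realize_relabel]
  refine hsat.exists_forall_realize v _ fun s => ?_
  obtain ⟨z, hz⟩ := hfin (s.sup id + 1)
  refine ⟨z, fun n hn => ?_⟩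
  simpa only [Formula.realize_relabel, hv] using
    hz ⟨n, Nat.lt_succ_of_le (Finset.le_sup (f := id) hn)⟩

end FirstOrder.Language

/-- in a sufficiently saturated structure `C`, if `(ā_i b̄_i : i ∈ ℤ)` is
order-indiscernible and witnesses the order property for `ψ(x̄; ȳ) = ∃z φ(x̄; ȳ; z)`, and if
for every `n ≥ 1` we have `C ⊨ ∃z ⋀_{j=1}^n φ(ā₀, b̄_j, z)`, then `φ(x̄z; ȳ)` has the order
property (witnessed in `C`, hence in `Th(C)`). -/
theorem op_shift_left {L : FirstOrder.Language.{u, v}} {C : Type w} [L.Structure C]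
    (ka kb : ℕ) (φ : L.Formula (Fin ka ⊕ (Fin kb ⊕ Unit)))
    (a : ℤ → Fin ka → C) (b : ℤ → Fin kb → C)
    -- `(ā_i b̄_i)` is order-indiscernible:
    (hind : ∀ (n : ℕ) (g h : Fin n → ℤ), StrictMono g → StrictMono h →
      ∀ ψ : L.Formula (Fin n × (Fin ka ⊕ Fin kb)),
        ((ψ.Realize fun q => Sum.elim (a (g q.1)) (b (g q.1)) q.2) ↔
          (ψ.Realize fun q => Sum.elim (a (h q.1)) (b (h q.1)) q.2)))
    -- the sequence witnesses the order property for `∃z φ`: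
    (hop : ∀ i j : ℤ,
      (∃ z : C, φ.Realize (Sum.elim (a i) (Sum.elim (b j) fun _ => z))) ↔ i < j)
    -- for every `n ≥ 1`, `C ⊨ ∃z ⋀_{j=1}^n φ(ā₀, b̄_j, z)`:
    (hcof : ∀ n : ℕ, 1 ≤ n → ∃ z : C, ∀ j : Fin n,
      φ.Realize (Sum.elim (a 0) (Sum.elim (b ((j : ℤ) + 1)) fun _ => z)))
    -- `C` is sufficiently saturated: every countable, finitely satisfiable set of formulas in
    -- one variable with countably many parameters from `C` is realized in `C`:
    (hsat : ∀ (v : ℕ → C) (Φ : ℕ → L.Formula (ℕ ⊕ Unit)),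
      (∀ s : Finset ℕ, ∃ z : C, ∀ i ∈ s, (Φ i).Realize (Sum.elim v fun _ => z)) →
        ∃ z : C, ∀ i, (Φ i).Realize (Sum.elim v fun _ => z)) :
    -- then `φ(x̄z; ȳ)` has the order property, witnessed by `(ā_i c_i)` and `(b̄_j)`:
    ∃ c : ℤ → C, ∀ i j : ℤ,
      φ.Realize (Sum.elim (a i) (Sum.elim (b j) fun _ => c i)) ↔ i < j := by
  have : Nonempty C := (hcof 1 le_rfl).nonempty
  have ahead (i : ℤ) : ∃ z : C, ∀ n : ℕ,
      φ.Realize (Sum.elim (a i) (Sum.elim (b (i + (n + 1))) fun _ => z)) := by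
    refine RealizesCountableTypes.exists_forall_realize_seq hsat φ (a i)
      (fun n => b (i + (n + 1))) fun N => ?_
    obtain ⟨z, hz⟩ := OrderIndiscernible.exists_forall_realize_add hind
      (hcof (N + 1) (Nat.le_add_left 1 N)) i
    exact ⟨z, fun n => by simpa using hz n.castSucc⟩
  choose c hc using ahead
  refine ⟨c, fun i j => ⟨fun h => (hop i j).1 ⟨c i, h⟩, fun hij => ?_⟩⟩
  obtain ⟨n, rfl⟩ : ∃ n : ℕ, j = i + (n + 1) := ⟨(j - i - 1).toNat, by omega⟩
  exact hc i n
end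

section
/- In the class Perm_{k+1} (closures under substructure of permutations blown up into disjoint (k+1)-tuples), the number of isomorphism types of n-element structures is at most n · ⌊n/(k+1)⌋!, which is O(⌊n/k⌋!). -/
open FirstOrder Language

/-- The language of `Perm_m`: two `2m`-ary relation symbols (and nothing else). -/
def permLang (m : ℕ) : FirstOrder.Language :=
  ⟨fun _ => PEmpty, fun n => Fin 2 × PLift (n = 2 * m)⟩

/-- The interpretation of the two `2m`-ary relations on the blow-up of the permutation `σ`
on `Fin s` into `m`-tuples: `R_t(x̄ȳ)` holds iff `x̄` enumerates a complete block `a`, `ȳ`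
enumerates a complete block `b`, and `a` precedes `b` in the `t`-th order. -/
def blowRel (s m : ℕ) (σ : Equiv.Perm (Fin s)) :
    ∀ {n : ℕ}, (permLang m).Relations n → (Fin n → Fin s × Fin m) → Prop :=
  fun {n} R x => ∃ a b : Fin s,
    (∀ i : Fin m, x (Fin.cast R.2.down.symm ⟨(i : ℕ), by omega⟩) = (a, i)) ∧
    (∀ i : Fin m, x (Fin.cast R.2.down.symm ⟨m + (i : ℕ), by omega⟩) = (b, i)) ∧
    (if R.1 = 0 then a < b else σ a < σ b)

/-- The induced `permLang m`-structure on a subset `A` of the blow-up of `σ` into `m`-tuples: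
these subsets are exactly the members of the hereditary class `Perm_m`. -/
def permMemberStructure (s m : ℕ) (σ : Equiv.Perm (Fin s)) (A : Set (Fin s × Fin m)) :
    (permLang m).Structure A where
  funMap := fun f _ => PEmpty.elim f
  RelMap := fun R x => blowRel s m σ R (fun i => (x i : Fin s × Fin m))

namespace PermGrowth

/-- complete blocks of `A` -/
def cBlocks (s m : ℕ) (A : Finset (Fin s × Fin m)) : Finset (Fin s) :=
  Finset.univ.filter fun a => ∀ i, (a, i) ∈ A

lemma mem_cBlocks {s m : ℕ} {A : Finset (Fin s × Fin m)} {a : Fin s} :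
    a ∈ cBlocks s m A ↔ ∀ i, (a, i) ∈ A := by simp [cBlocks]

/-- order enumeration of complete blocks -/
noncomputable def bOrd (s m : ℕ) (A : Finset (Fin s × Fin m)) :
    Fin (cBlocks s m A).card ≃o ↥(cBlocks s m A) :=
  (cBlocks s m A).orderIsoOfFin rfl

lemma card_image_eq (s m : ℕ) (σ : Equiv.Perm (Fin s)) (A : Finset (Fin s × Fin m)) :
    ((cBlocks s m A).image σ).card = (cBlocks s m A).card :=
  Finset.card_image_of_injective _ σ.injective

noncomputable def bPermFun (s m : ℕ) (σ : Equiv.Perm (Fin s)) (A : Finset (Fin s × Fin m)) :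
    Fin (cBlocks s m A).card → Fin (cBlocks s m A).card :=
  fun x => Fin.cast (card_image_eq s m σ A)
    ((((cBlocks s m A).image σ).orderIsoOfFin rfl).symm
      ⟨σ (bOrd s m A x), Finset.mem_image_of_mem σ (bOrd s m A x).2⟩)

lemma bPermFun_lt_iff (s m : ℕ) (σ : Equiv.Perm (Fin s)) (A : Finset (Fin s × Fin m))
    (x y : Fin (cBlocks s m A).card) :
    bPermFun s m σ A x < bPermFun s m σ A y ↔ σ (bOrd s m A x) < σ (bOrd s m A y) := by
  unfold bPermFun
  rw [Fin.lt_def]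
  simp only [Fin.coe_cast]
  rw [← Fin.lt_def, OrderIso.lt_iff_lt, Subtype.mk_lt_mk]

lemma bPermFun_injective (s m : ℕ) (σ : Equiv.Perm (Fin s)) (A : Finset (Fin s × Fin m)) :
    Function.Injective (bPermFun s m σ A) := by
  intro x y h
  unfold bPermFun at h
  have h1 : (((Finset.image (⇑σ) (cBlocks s m A)).orderIsoOfFin rfl).symm
      ⟨σ (bOrd s m A x), Finset.mem_image_of_mem σ (bOrd s m A x).2⟩) =
      (((Finset.image (⇑σ) (cBlocks s m A)).orderIsoOfFin rfl).symm
      ⟨σ (bOrd s m A y), Finset.mem_image_of_mem σ (bOrd s m A y).2⟩) := by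
    have := congrArg Fin.val h
    simp only [Fin.coe_cast] at this
    exact Fin.val_injective this
  have h2 := ((Finset.image (⇑σ) (cBlocks s m A)).orderIsoOfFin rfl).symm.injective h1
  have h3 : σ (bOrd s m A x) = σ (bOrd s m A y) := congrArg Subtype.val h2
  have h4 : (bOrd s m A x : Fin s) = bOrd s m A y := σ.injective h3
  exact (bOrd s m A).injective (Subtype.ext h4)

/-- the permutation induced on the complete blocks -/
noncomputable def bPerm (s m : ℕ) (σ : Equiv.Perm (Fin s)) (A : Finset (Fin s × Fin m)) :
    Equiv.Perm (Fin (cBlocks s m A).card) :=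
  Equiv.ofBijective _ (Finite.injective_iff_bijective.mp (bPermFun_injective s m σ A))

lemma bPerm_lt_iff (s m : ℕ) (σ : Equiv.Perm (Fin s)) (A : Finset (Fin s × Fin m))
    (x y : Fin (cBlocks s m A).card) :
    bPerm s m σ A x < bPerm s m σ A y ↔ σ (bOrd s m A x) < σ (bOrd s m A y) :=
  bPermFun_lt_iff s m σ A x y

lemma perm_heq_apply {r₁ r₂ : ℕ} (hr : r₁ = r₂) {π₁ : Equiv.Perm (Fin r₁)}
    {π₂ : Equiv.Perm (Fin r₂)} (h : HEq π₁ π₂) (x : Fin r₁) :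
    π₂ (Fin.cast hr x) = Fin.cast hr (π₁ x) := by
  subst hr; cases h; rfl

section Iso

variable {m : ℕ} {s₁ s₂ : ℕ} (σ₁ : Equiv.Perm (Fin s₁)) (σ₂ : Equiv.Perm (Fin s₂))
  (A₁ : Finset (Fin s₁ × Fin m)) (A₂ : Finset (Fin s₂ × Fin m))

/-- the complete part of A as a finset -/
def cPart (s m : ℕ) (A : Finset (Fin s × Fin m)) : Finset (Fin s × Fin m) :=
  (cBlocks s m A) ×ˢ Finset.univ

lemma cPart_subset (s m : ℕ) (A : Finset (Fin s × Fin m)) : cPart s m A ⊆ A := by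
  intro x hx
  rw [cPart, Finset.mem_product] at hx
  have := mem_cBlocks.mp hx.1 x.2
  simpa using this

lemma cPart_card (s m : ℕ) (A : Finset (Fin s × Fin m)) :
    (cPart s m A).card = (cBlocks s m A).card * m := by
  simp [cPart]

lemma nonempty_iso (hm : 0 < m) (hcard : A₁.card = A₂.card)
    (hr : (cBlocks s₁ m A₁).card = (cBlocks s₂ m A₂).card)
    (hπ : HEq (bPerm s₁ m σ₁ A₁) (bPerm s₂ m σ₂ A₂)) :
    Nonempty (@Language.Equiv (permLang m) _ _
      (permMemberStructure s₁ m σ₁ (A₁ : Set _)) (permMemberStructure s₂ m σ₂ (A₂ : Set _))) := by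
  classical
  -- the map on complete blocks
  set F : ↥(cBlocks s₁ m A₁) → Fin s₂ :=
    fun u => (bOrd s₂ m A₂ (Fin.cast hr ((bOrd s₁ m A₁).symm u)) : Fin s₂) with hF
  have hFmem : ∀ u, F u ∈ cBlocks s₂ m A₂ := fun u =>
    (bOrd s₂ m A₂ (Fin.cast hr ((bOrd s₁ m A₁).symm u))).2
  have hcastinj : Function.Injective (Fin.cast hr) := fun a b hab =>
    Fin.val_injective (by simpa using congrArg Fin.val hab)
  have hFinj : Function.Injective F := by
    intro u v h
    have h1 := (bOrd s₂ m A₂).injective (Subtype.ext h)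
    have h2 := hcastinj h1
    exact (bOrd s₁ m A₁).symm.injective h2
  have hcastlt : ∀ a b, Fin.cast hr a < Fin.cast hr b ↔ a < b := by
    intro a b; rw [Fin.lt_def, Fin.lt_def]; simp
  have hFlt : ∀ u v, F u < F v ↔ (u : Fin s₁) < (v : Fin s₁) := by
    intro u v
    simp only [hF]
    rw [Subtype.coe_lt_coe, OrderIso.lt_iff_lt, hcastlt, OrderIso.lt_iff_lt,
      Subtype.coe_lt_coe]
  have hFσ : ∀ u v, σ₂ (F u) < σ₂ (F v) ↔ σ₁ u < σ₁ v := by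
    intro u v
    simp only [hF]
    rw [← bPerm_lt_iff, perm_heq_apply hr hπ, perm_heq_apply hr hπ, hcastlt,
      bPerm_lt_iff]
    rw [OrderIso.apply_symm_apply, OrderIso.apply_symm_apply]
  -- incomplete parts have equal cardinality
  have hpc : (A₁ \ cPart s₁ m A₁).card = (A₂ \ cPart s₂ m A₂).card := by
    rw [Finset.card_sdiff_of_subset (cPart_subset _ _ _), Finset.card_sdiff_of_subset (cPart_subset _ _ _),
      cPart_card, cPart_card, hcard, hr]
  set ψ : ↥(A₁ \ cPart s₁ m A₁) ≃ ↥(A₂ \ cPart s₂ m A₂) := Finset.equivOfCardEq hpc with hψ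
  have hmem1 : ∀ x : ↥(A₁ : Set (Fin s₁ × Fin m)), x.1.1 ∉ cBlocks s₁ m A₁ →
      x.1 ∈ A₁ \ cPart s₁ m A₁ := by
    intro x hx
    rw [Finset.mem_sdiff]
    refine ⟨Finset.mem_coe.mp x.2, fun hc => hx ?_⟩
    simp only [cPart, Finset.mem_product] at hc
    exact hc.1
  set f : ↥(A₁ : Set (Fin s₁ × Fin m)) → ↥(A₂ : Set (Fin s₂ × Fin m)) :=
    fun x => if h : x.1.1 ∈ cBlocks s₁ m A₁ then
      ⟨(F ⟨x.1.1, h⟩, x.1.2), Finset.mem_coe.mpr (mem_cBlocks.mp (hFmem ⟨x.1.1, h⟩) x.1.2)⟩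
    else ⟨(ψ ⟨x.1, hmem1 x h⟩ : Fin s₂ × Fin m),
      Finset.mem_coe.mpr (Finset.mem_sdiff.mp (ψ ⟨x.1, hmem1 x h⟩).2).1⟩
    with hf
  have hf_c : ∀ (a : Fin s₁) (ha : a ∈ cBlocks s₁ m A₁) (i : Fin m)
      (h : ((a, i) : Fin s₁ × Fin m) ∈ (A₁ : Set (Fin s₁ × Fin m))),
      (f ⟨(a, i), h⟩ : Fin s₂ × Fin m) = (F ⟨a, ha⟩, i) := by
    intro a ha i h
    simp only [hf, dif_pos ha]
  have hf_nc : ∀ x : ↥(A₁ : Set (Fin s₁ × Fin m)), x.1.1 ∉ cBlocks s₁ m A₁ →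
      (f x : Fin s₂ × Fin m).1 ∉ cBlocks s₂ m A₂ := by
    intro x hx
    simp only [hf, dif_neg hx]
    have h2 := (Finset.mem_sdiff.mp (ψ ⟨x.1, hmem1 x hx⟩).2).2
    intro hc
    exact h2 (by simp only [cPart, Finset.mem_product]; exact ⟨hc, Finset.mem_univ _⟩)
  have hfinj : Function.Injective f := by
    intro x y hxy
    by_cases hx : x.1.1 ∈ cBlocks s₁ m A₁ <;> by_cases hy : y.1.1 ∈ cBlocks s₁ m A₁
    · simp only [hf, dif_pos hx, dif_pos hy, Subtype.mk.injEq, Prod.mk.injEq] at hxy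
      obtain ⟨h1, h2⟩ := hxy
      have h3 : x.1.1 = y.1.1 := congrArg Subtype.val (hFinj h1)
      exact Subtype.ext (Prod.ext h3 h2)
    · exfalso
      have hin : (f x : Fin s₂ × Fin m).1 ∈ cBlocks s₂ m A₂ := by
        simp only [hf, dif_pos hx]; exact hFmem _
      rw [hxy] at hin
      exact hf_nc y hy hin
    · exfalso
      have hin : (f y : Fin s₂ × Fin m).1 ∈ cBlocks s₂ m A₂ := by
        simp only [hf, dif_pos hy]; exact hFmem _
      rw [← hxy] at hin
      exact hf_nc x hx hin
    · simp only [hf, dif_neg hx, dif_neg hy, Subtype.mk.injEq] at hxy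
      have h1 : ψ ⟨x.1, hmem1 x hx⟩ = ψ ⟨y.1, hmem1 y hy⟩ := Subtype.ext hxy
      have h2 := ψ.injective h1
      have h3 : x.1 = y.1 := by simpa using h2
      exact Subtype.ext h3
  have hcards : Fintype.card (↥(A₁ : Set (Fin s₁ × Fin m)))
      = Fintype.card (↥(A₂ : Set (Fin s₂ × Fin m))) := by
    have c1 : Fintype.card (↥(A₁ : Set (Fin s₁ × Fin m))) = A₁.card :=
      (Fintype.card_congr (Equiv.subtypeEquivRight fun x => Finset.mem_coe)).trans
        (Fintype.card_coe A₁)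
    have c2 : Fintype.card (↥(A₂ : Set (Fin s₂ × Fin m))) = A₂.card :=
      (Fintype.card_congr (Equiv.subtypeEquivRight fun x => Finset.mem_coe)).trans
        (Fintype.card_coe A₂)
    rw [c1, c2, hcard]
  set φ : ↥(A₁ : Set (Fin s₁ × Fin m)) ≃ ↥(A₂ : Set (Fin s₂ × Fin m)) :=
    Equiv.ofBijective f ((Fintype.bijective_iff_injective_and_card f).mpr ⟨hfinj, hcards⟩)
    with hφdef
  have hφf : ∀ x, φ x = f x := fun x => rfl
  letI : (permLang m).Structure ↥(A₁ : Set (Fin s₁ × Fin m)) :=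
    permMemberStructure s₁ m σ₁ (A₁ : Set _)
  letI : (permLang m).Structure ↥(A₂ : Set (Fin s₂ × Fin m)) :=
    permMemberStructure s₂ m σ₂ (A₂ : Set _)
  refine ⟨{ toEquiv := φ, map_fun' := fun {l} fn _ => fn.elim, map_rel' := ?_ }⟩
  intro l R x
  show blowRel s₂ m σ₂ R (fun i => ((φ ∘ x) i : Fin s₂ × Fin m)) ↔
    blowRel s₁ m σ₁ R (fun i => (x i : Fin s₁ × Fin m))
  unfold blowRel
  constructor
  · rintro ⟨a₂, b₂, h1, h2, h3⟩
    have ha₂ : a₂ ∈ cBlocks s₂ m A₂ := mem_cBlocks.mpr fun i => by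
      have h := h1 i
      simp only [Function.comp_apply] at h
      exact Finset.mem_coe.mp (h ▸ (φ (x _)).2)
    have hb₂ : b₂ ∈ cBlocks s₂ m A₂ := mem_cBlocks.mpr fun i => by
      have h := h2 i
      simp only [Function.comp_apply] at h
      exact Finset.mem_coe.mp (h ▸ (φ (x _)).2)
    have key : ∀ (j : Fin l) (c : Fin s₂) (i : Fin m),
        (φ (x j) : Fin s₂ × Fin m) = (c, i) → c ∈ cBlocks s₂ m A₂ →
        ∃ u : ↥(cBlocks s₁ m A₁), F u = c ∧ (x j : Fin s₁ × Fin m) = (u.1, i) := by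
      intro j c i hji hc
      by_cases hx1 : (x j : Fin s₁ × Fin m).1 ∈ cBlocks s₁ m A₁
      · refine ⟨⟨(x j : Fin s₁ × Fin m).1, hx1⟩, ?_, ?_⟩
        · have h' : (φ (x j) : Fin s₂ × Fin m)
              = (F ⟨(x j : Fin s₁ × Fin m).1, hx1⟩, (x j : Fin s₁ × Fin m).2) :=
            hf_c (x j : Fin s₁ × Fin m).1 hx1 (x j : Fin s₁ × Fin m).2 (x j).2
          rw [hji] at h'
          exact (Prod.mk.injEq _ _ _ _ ▸ h').1.symm
        · have h' : (φ (x j) : Fin s₂ × Fin m)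
              = (F ⟨(x j : Fin s₁ × Fin m).1, hx1⟩, (x j : Fin s₁ × Fin m).2) :=
            hf_c (x j : Fin s₁ × Fin m).1 hx1 (x j : Fin s₁ × Fin m).2 (x j).2
          rw [hji] at h'
          have h2' : (x j : Fin s₁ × Fin m).2 = i := ((Prod.mk.injEq _ _ _ _ ▸ h').2).symm
          exact Prod.ext rfl h2'
      · exfalso
        have := hf_nc (x j) hx1
        rw [hφf] at hji  -- φ = f definitional
        rw [hji] at this
        exact this hc
    have kA := fun i : Fin m => key _ a₂ i (h1 i) ha₂
    have kB := fun i : Fin m => key _ b₂ i (h2 i) hb₂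
    choose ua hua1 hua2 using kA
    choose ub hub1 hub2 using kB
    have i0 : Fin m := ⟨0, hm⟩
    have huaeq : ∀ i, ua i = ua i0 := fun i => hFinj ((hua1 i).trans (hua1 i0).symm)
    have hubeq : ∀ i, ub i = ub i0 := fun i => hFinj ((hub1 i).trans (hub1 i0).symm)
    refine ⟨(ua i0).1, (ub i0).1, fun i => ?_, fun i => ?_, ?_⟩
    · have := hua2 i
      rw [huaeq i] at this
      exact this
    · have := hub2 i
      rw [hubeq i] at this
      exact this
    · by_cases hR : R.1 = 0
      · simp only [if_pos hR] at h3 ⊢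
        rw [← hua1 i0, ← hub1 i0] at h3
        exact (hFlt _ _).mp h3
      · simp only [if_neg hR] at h3 ⊢
        rw [← hua1 i0, ← hub1 i0] at h3
        exact (hFσ _ _).mp h3
  · rintro ⟨a, b, h1, h2, h3⟩
    have ha : a ∈ cBlocks s₁ m A₁ := mem_cBlocks.mpr fun i => by
      have h := h1 i
      exact Finset.mem_coe.mp (h ▸ (x _).2)
    have hb : b ∈ cBlocks s₁ m A₁ := mem_cBlocks.mpr fun i => by
      have h := h2 i
      exact Finset.mem_coe.mp (h ▸ (x _).2)
    refine ⟨F ⟨a, ha⟩, F ⟨b, hb⟩, fun i => ?_, fun i => ?_, ?_⟩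
    · have hx : x (Fin.cast R.2.down.symm ⟨(i : ℕ), by omega⟩)
          = ⟨(a, i), Finset.mem_coe.mpr (mem_cBlocks.mp ha i)⟩ := Subtype.ext (h1 i)
      simp only [Function.comp_apply]
      rw [hx, hφf]
      exact hf_c a ha i _
    · have hx : x (Fin.cast R.2.down.symm ⟨m + (i : ℕ), by omega⟩)
          = ⟨(b, i), Finset.mem_coe.mpr (mem_cBlocks.mp hb i)⟩ := Subtype.ext (h2 i)
      simp only [Function.comp_apply]
      rw [hx, hφf]
      exact hf_c b hb i _
    · by_cases hR : R.1 = 0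
      · simp only [if_pos hR] at h3 ⊢
        exact (hFlt _ _).mpr h3
      · simp only [if_neg hR] at h3 ⊢
        exact (hFσ _ _).mpr h3

end Iso

lemma sigma_card_le (n q : ℕ) (h : q + 1 ≤ n) :
    Fintype.card ((r : Fin (q+1)) × Equiv.Perm (Fin (r : ℕ))) ≤ n * q.factorial := by
  rw [Fintype.card_sigma]
  have h1 : ∀ r : Fin (q+1), Fintype.card (Equiv.Perm (Fin (r : ℕ))) ≤ q.factorial := by
    intro r
    rw [Fintype.card_perm, Fintype.card_fin]
    exact Nat.factorial_le (Nat.lt_succ_iff.mp r.2)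
  calc ∑ r : Fin (q+1), Fintype.card (Equiv.Perm (Fin (r : ℕ)))
      ≤ ∑ _r : Fin (q+1), q.factorial := Finset.sum_le_sum fun r _ => h1 r
    _ = (q+1) * q.factorial := by simp [Finset.sum_const, mul_comm]
    _ ≤ n * q.factorial := Nat.mul_le_mul_right _ h

end PermGrowth

open PermGrowth in
theorem perm_class_growth' (k : ℕ) (hk : 1 ≤ k) :
    (∀ (n : ℕ), 1 ≤ n → ∀ (N : ℕ)
      (fam : Fin N → Σ s : ℕ, Equiv.Perm (Fin s) × Finset (Fin s × Fin (k + 1))),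
      (∀ t, ((fam t).2.2 : Finset (Fin (fam t).1 × Fin (k + 1))).card = n) →
      (∀ t t', t ≠ t' → IsEmpty
        (@Language.Equiv (permLang (k + 1)) _ _
          (permMemberStructure (fam t).1 (k + 1) (fam t).2.1 ((fam t).2.2 : Set _))
          (permMemberStructure (fam t').1 (k + 1) (fam t').2.1 ((fam t').2.2 : Set _)))) →
      N ≤ n * Nat.factorial (n / (k + 1))) ∧
    (∃ c n₀ : ℕ, 0 < c ∧ ∀ n ≥ n₀,
      n * Nat.factorial (n / (k + 1)) ≤ c * Nat.factorial (n / k)) := by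
  constructor
  · intro n hn N fam hcards hniso
    set q := n / (k + 1) with hqdef
    have hq1 : q + 1 ≤ n := by
      have h2 : n / (k+1) ≤ n / 2 := Nat.div_le_div_left (by omega) (by omega)
      omega
    have hrle : ∀ t, (cBlocks (fam t).1 (k+1) (fam t).2.2).card < q + 1 := by
      intro t
      have hsub := Finset.card_le_card (cPart_subset (fam t).1 (k+1) (fam t).2.2)
      rw [cPart_card, hcards t] at hsub
      have := (Nat.le_div_iff_mul_le (by omega : 0 < k + 1)).mpr hsub
      omega
    set inv : Fin N → (r : Fin (q+1)) × Equiv.Perm (Fin (r : ℕ)) := fun t =>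
      ⟨⟨(cBlocks (fam t).1 (k+1) (fam t).2.2).card, hrle t⟩,
        bPerm (fam t).1 (k+1) (fam t).2.1 (fam t).2.2⟩ with hinv
    have hinj : Function.Injective inv := by
      intro t t' h
      by_contra hne
      simp only [hinv, Sigma.mk.inj_iff, Fin.mk.injEq] at h
      obtain ⟨h1, h2⟩ := h
      exact (hniso t t' hne).false
        (nonempty_iso (fam t).2.1 (fam t').2.1 (fam t).2.2 (fam t').2.2 (by omega)
          ((hcards t).trans (hcards t').symm) h1 h2).some
    calc N = Fintype.card (Fin N) := (Fintype.card_fin N).symm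
      _ ≤ Fintype.card ((r : Fin (q+1)) × Equiv.Perm (Fin (r : ℕ))) :=
          Fintype.card_le_of_injective inv hinj
      _ ≤ n * Nat.factorial q := sigma_card_le n q hq1
  · refine ⟨k + 2, (k+1)*(k+1), by omega, fun n hn => ?_⟩
    set a := n / (k + 1) with ha
    set b := n / k with hb
    have hdm : a * (k+1) ≤ n := Nat.div_mul_le_self n (k+1)
    have hka : k ≤ a := (Nat.le_div_iff_mul_le (by omega)).mpr (by nlinarith)
    have hab : a + 1 ≤ b := (Nat.le_div_iff_mul_le (by omega : 0 < k)).mpr (by nlinarith)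
    have hfac : (a+1).factorial ≤ b.factorial := Nat.factorial_le hab
    have h1 : (k+1) * a + n % (k+1) = n := Nat.div_add_mod n (k+1)
    have h2 : n % (k+1) < k+1 := Nat.mod_lt _ (by omega)
    have hn2 : n ≤ (k+2)*(a+1) := by nlinarith
    calc n * a.factorial ≤ ((k+2)*(a+1)) * a.factorial := Nat.mul_le_mul_right _ hn2
      _ = (k+2) * ((a+1) * a.factorial) := by ring
      _ = (k+2) * (a+1).factorial := by rw [Nat.factorial_succ]
      _ ≤ (k+2) * b.factorial := Nat.mul_le_mul_left _ hfac


/-- the number of isomorphism types of `n`-element members of `Perm_{k+1}` is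
at most `n · ⌊n/(k+1)⌋!`, which is `O(⌊n/k⌋!)`. -/
theorem perm_class_growth (k : ℕ) (hk : 1 ≤ k) :
    -- any family of pairwise non-isomorphic `n`-element members of `Perm_{k+1}` has size at
    -- most `n · ⌊n/(k+1)⌋!`:
    (∀ (n : ℕ), 1 ≤ n → ∀ (N : ℕ)
      (fam : Fin N → Σ s : ℕ, Equiv.Perm (Fin s) × Finset (Fin s × Fin (k + 1))),
      (∀ t, ((fam t).2.2 : Finset (Fin (fam t).1 × Fin (k + 1))).card = n) →
      (∀ t t', t ≠ t' → IsEmpty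
        (@Language.Equiv (permLang (k + 1)) _ _
          (permMemberStructure (fam t).1 (k + 1) (fam t).2.1 ((fam t).2.2 : Set _))
          (permMemberStructure (fam t').1 (k + 1) (fam t').2.1 ((fam t').2.2 : Set _)))) →
      N ≤ n * Nat.factorial (n / (k + 1))) ∧
    -- and `n · ⌊n/(k+1)⌋! = O(⌊n/k⌋!)`:
    (∃ c n₀ : ℕ, 0 < c ∧ ∀ n ≥ n₀,
      n * Nat.factorial (n / (k + 1)) ≤ c * Nat.factorial (n / k)) :=
  perm_class_growth' k hk
end
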